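/- arXiv:2506.18604 — 4 statements merged into one kernel-verified Lean document; each statement's English description precedes it below -/
import Mathlib

section
/- With a_t as in the autoregressive construction ([a_t]_i = 0 for i < D, [a_t]_D = F_t(x_D|x_{1:D-1})·∏_{j<D} f_t(x_j|x_{1:j-1})) and j_t = -∂_t a_t, the D-th coordinate of the flux satisfies lim_{x_D → +∞} [j_t]_D(x) = -∂_t( ∏_{i=1}^{D-1} f_t(x_i | x_{1:i-1}) ). In particular, if ∂_t(∏_{i<D} f_t(x_i|x_{1:i-1})) ≠ 0 at some point (t, x_{1:D-1}), then lim_{x_D → +∞} |j_t(x)|² ≠ 0 (spurious flux). -/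
open Filter Topology

noncomputable def pd {D : ℕ} (i : Fin D) (f : (Fin D → ℝ) → ℝ) (x : Fin D → ℝ) : ℝ :=
  deriv (fun s => f (Function.update x i s)) (x i)

lemma contDiff_update' {D : ℕ} (x : Fin D → ℝ) (i : Fin D) :
    ContDiff ℝ (⊤ : ℕ∞) (fun s : ℝ => Function.update x i s) := by
  rw [contDiff_pi]
  intro j
  by_cases h : j = i
  · subst h; simp only [Function.update_self]; exact contDiff_id
  · simp only [Function.update_apply, if_neg h]
    exact contDiff_const

/-- with the autoregressive a_t and j_t = -∂_t a_t, the D-th flux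
coordinate tends to -∂_t(∏_{i<D} f_t(x_i|x_{1:i-1})) as x_D → +∞; in particular if this
time derivative is nonzero then |j_t(x)|² does not tend to 0 (spurious flux). -/
theorem spurious_flux_autoregressive (D : ℕ)
    (F f : ℝ → Fin (D + 1) → (Fin (D + 1) → ℝ) → ℝ)
    (hFsmooth : ∀ i, ContDiff ℝ (⊤ : ℕ∞) fun p : ℝ × (Fin (D + 1) → ℝ) => F p.1 i p.2)
    (hdep : ∀ (t : ℝ) (i : Fin (D + 1)) (x y : Fin (D + 1) → ℝ),
      (∀ j ≤ i, x j = y j) → F t i x = F t i y)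
    (hf : ∀ t i x, f t i x = pd i (F t i) x)
    (hF1 : ∀ (t : ℝ) (x : Fin (D + 1) → ℝ),
      Tendsto (fun s => F t (Fin.last D) (Function.update x (Fin.last D) s)) atTop (nhds 1))
    (hFt : ∀ (t : ℝ) (x : Fin (D + 1) → ℝ),
      Tendsto (fun s => deriv (fun τ => F τ (Fin.last D) (Function.update x (Fin.last D) s)) t)
        atTop (nhds 0))
    (a j : ℝ → (Fin (D + 1) → ℝ) → Fin (D + 1) → ℝ)
    (ha0 : ∀ t x i, i ≠ Fin.last D → a t x i = 0)
    (haD : ∀ t x, a t x (Fin.last D)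
      = F t (Fin.last D) x * ∏ k : Fin D, f t k.castSucc x)
    (hj : ∀ t x i, j t x i = -deriv (fun τ => a τ x i) t) :
    ∀ (t : ℝ) (x : Fin (D + 1) → ℝ),
      Tendsto (fun s => j t (Function.update x (Fin.last D) s) (Fin.last D)) atTop
          (nhds (-deriv (fun τ => ∏ k : Fin D, f τ k.castSucc x) t))
        ∧ (deriv (fun τ => ∏ k : Fin D, f τ k.castSucc x) t ≠ 0 →
            ¬ Tendsto (fun s => ∑ i, (j t (Function.update x (Fin.last D) s) i) ^ 2)
              atTop (nhds 0)) := by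
  intro t x
  set L := Fin.last D with hL
  -- f for indices < D does not depend on the last coordinate
  have hfind : ∀ (τ s : ℝ) (k : Fin D),
      f τ k.castSucc (Function.update x L s) = f τ k.castSucc x := by
    intro τ s k
    rw [hf, hf]
    unfold pd
    have hk : (k.castSucc : Fin (D+1)) ≠ L := (Fin.castSucc_lt_last k).ne
    rw [Function.update_of_ne hk]
    congr 1
    funext s'
    apply hdep
    intro i hi
    have hiL : i ≠ L := (lt_of_le_of_lt hi (Fin.castSucc_lt_last k)).ne
    by_cases hik : i = k.castSucc
    · subst hik; simp
    · simp [Function.update_apply, hik, hiL]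
  -- each f τ k x is smooth in τ
  have hfd : ∀ k : Fin D, Differentiable ℝ (fun τ => f τ k.castSucc x) := by
    intro k
    have hcomp : ContDiff ℝ (⊤ : ℕ∞) (Function.uncurry
        fun τ s => F τ k.castSucc (Function.update x k.castSucc s)) := by
      exact (hFsmooth k.castSucc).comp
        (contDiff_fst.prodMk ((contDiff_update' x k.castSucc).comp contDiff_snd))
    have h2 := hcomp.fderiv_apply (n := (⊤ : ℕ∞)) (g := fun _ : ℝ => x k.castSucc)
      (k := fun _ : ℝ => (1 : ℝ)) contDiff_const contDiff_const (by simp)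
    have heq : (fun τ => f τ k.castSucc x)
        = fun τ => fderiv ℝ (fun s => F τ k.castSucc (Function.update x k.castSucc s))
            (x k.castSucc) 1 := by
      funext τ
      rw [hf]
      unfold pd
      rw [← fderiv_apply_one_eq_deriv]
    rw [heq]
    exact h2.differentiable (by simp)
  set P : ℝ → ℝ := fun τ => ∏ k : Fin D, f τ k.castSucc x with hP
  have hPd : Differentiable ℝ P := by
    apply Differentiable.fun_finsetProd
    intro k _
    exact hfd k
  have hGd : ∀ v : Fin (D+1) → ℝ, Differentiable ℝ (fun τ => F τ L v) := by
    intro v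
    exact ((hFsmooth L).differentiable (by simp)).comp
      (differentiable_id.prodMk (differentiable_const v))
  have hjs : ∀ s : ℝ, j t (Function.update x L s) L
      = -(deriv (fun τ => F τ L (Function.update x L s)) t * P t
          + F t L (Function.update x L s) * deriv P t) := by
    intro s
    rw [hj]
    congr 1
    have heq : (fun τ => a τ (Function.update x L s) L)
        = fun τ => F τ L (Function.update x L s) * P τ := by
      funext τ
      rw [haD]
      congr 1
      exact Finset.prod_congr rfl fun k _ => hfind τ s k
    rw [heq, deriv_fun_mul ((hGd _).differentiableAt) hPd.differentiableAt]
  have h1 : Tendsto (fun s => j t (Function.update x L s) L) atTop (nhds (-deriv P t)) := by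
    have hfe : (fun s => j t (Function.update x L s) L)
        = fun s => -(deriv (fun τ => F τ L (Function.update x L s)) t * P t
            + F t L (Function.update x L s) * deriv P t) := funext hjs
    rw [hfe]
    have := (((hFt t x).mul_const (P t)).add ((hF1 t x).mul_const (deriv P t))).neg
    simpa using this
  refine ⟨h1, fun hne hcon => ?_⟩
  have hsum : (fun s => ∑ i, (j t (Function.update x L s) i) ^ 2)
      = fun s => (j t (Function.update x L s) L) ^ 2 := by
    funext s
    apply Fintype.sum_eq_single
    intro i hi
    rw [hj]
    have hz : (fun τ => a τ (Function.update x L s) i) = fun _ => 0 :=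
      funext fun τ => ha0 τ _ i hi
    rw [hz, deriv_const]
    simp
  rw [hsum] at hcon
  have h2 : Tendsto (fun s => (j t (Function.update x L s) L) ^ 2) atTop
      (nhds ((-deriv P t) ^ 2)) := h1.pow 2
  have h0 := tendsto_nhds_unique hcon h2
  simp only [neg_sq] at h0
  exact hne (pow_eq_zero_iff two_ne_zero |>.mp h0.symm)
end

section
/- Define m_i(t,x) = (∏_{j=i+1}^D σ'(x_j)) · ∂_t(∏_{j=1}^i f_t(x_j|x_{1:j-1})) for i = 1,…,D-1, and let b_t be the vector field with [b_t]_D(x) = σ(x_D)·∂_t(∏_{j=1}^{D-1} f_t(x_j|x_{1:j-1})), [b_t]_1(x) = -(∏_{j=2}^D σ'(x_j))·∂_t F_t(x_1), and for 1 < i < D, [b_t]_i(x) = (∏_{j=i+1}^D σ'(x_j))·[(σ(x_i) - F_t(x_i|x_{1:i-1}))·∂_t(∏_{j=1}^{i-1} f_t(x_j|x_{1:j-1})) - ∂_t F_t(x_i|x_{1:i-1})·∏_{j=1}^{i-1} f_t(x_j|x_{1:j-1})]. Then ∂_{x_i}[b_t]_i = m_{i-1} - m_i for 1 < i < D, ∂_{x_1}[b_t]_1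 = -m_1, ∂_{x_D}[b_t]_D = m_{D-1}, and consequently ∇·b_t = ∑_{i=1}^D ∂_{x_i}[b_t]_i = 0 (telescoping). -/
open Filter Topology

/-- The quantity m_i(t,x) = (∏_{j>i} σ'(x_j)) · ∂_t(∏_{j≤i} f_t(x_j|x_{1:j-1})). -/
noncomputable def M (n : ℕ) (σ : ℝ → ℝ)
    (f : ℝ → Fin (n + 2) → (Fin (n + 2) → ℝ) → ℝ)
    (i : Fin (n + 2)) (t : ℝ) (x : Fin (n + 2) → ℝ) : ℝ :=
  (∏ j ∈ Finset.univ.filter (fun j => i < j), deriv σ (x j)) *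
    deriv (fun τ => ∏ j ∈ Finset.univ.filter (fun j => j ≤ i), f τ j x) t

section helpers
variable {g : ℝ × ℝ → ℝ}

lemma hasDerivAt_snd' (hg : ContDiff ℝ (⊤ : ℕ∞) g) (a b : ℝ) :
    HasDerivAt (fun s => g (a, s)) (fderiv ℝ g (a, b) (0, 1)) b := by
  have h := (hg.differentiable (by simp) (a, b)).hasFDerivAt
  have hab : HasDerivAt (fun s : ℝ => ((a, s) : ℝ × ℝ)) (0, 1) b :=
    (hasDerivAt_const b a).prodMk (hasDerivAt_id b)
  exact h.comp_hasDerivAt b hab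

lemma hasDerivAt_fst' (hg : ContDiff ℝ (⊤ : ℕ∞) g) (a b : ℝ) :
    HasDerivAt (fun τ => g (τ, b)) (fderiv ℝ g (a, b) (1, 0)) a := by
  have h := (hg.differentiable (by simp) (a, b)).hasFDerivAt
  have hab : HasDerivAt (fun τ : ℝ => ((τ, b) : ℝ × ℝ)) (1, 0) a :=
    (hasDerivAt_id a).prodMk (hasDerivAt_const a b)
  exact h.comp_hasDerivAt a hab

lemma contDiff_fderiv_apply (hg : ContDiff ℝ (⊤ : ℕ∞) g) (v : ℝ × ℝ) :
    ContDiff ℝ (⊤ : ℕ∞) (fun p => fderiv ℝ g p v) :=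
  (ContinuousLinearMap.apply ℝ ℝ v).contDiff.comp (hg.fderiv_right (by simp))

lemma fderiv_fderiv_apply (hg : ContDiff ℝ (⊤ : ℕ∞) g) (p w : ℝ × ℝ) (v : ℝ × ℝ) :
    fderiv ℝ (fun q => fderiv ℝ g q v) p w = fderiv ℝ (fderiv ℝ g) p w v := by
  have h1 : DifferentiableAt ℝ (fderiv ℝ g) p :=
    ((hg.fderiv_right (m := (⊤ : ℕ∞)) (by simp)).differentiable (by simp)) p
  have : fderiv ℝ (fun q => fderiv ℝ g q v) p
      = (ContinuousLinearMap.apply ℝ ℝ v).comp (fderiv ℝ (fderiv ℝ g) p) :=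
    ((ContinuousLinearMap.apply ℝ ℝ v).hasFDerivAt.comp p h1.hasFDerivAt).fderiv
  rw [this]; rfl

lemma hasDerivAt_fderiv_snd (hg : ContDiff ℝ (⊤ : ℕ∞) g) (v : ℝ × ℝ) (a b : ℝ) :
    HasDerivAt (fun s => fderiv ℝ g (a, s) v) (fderiv ℝ (fderiv ℝ g) (a, b) (0, 1) v) b := by
  have := hasDerivAt_snd' (contDiff_fderiv_apply hg v) a b
  rwa [fderiv_fderiv_apply hg] at this

lemma hasDerivAt_fderiv_fst (hg : ContDiff ℝ (⊤ : ℕ∞) g) (v : ℝ × ℝ) (a b : ℝ) :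
    HasDerivAt (fun τ => fderiv ℝ g (τ, b) v) (fderiv ℝ (fderiv ℝ g) (a, b) (1, 0) v) a := by
  have := hasDerivAt_fst' (contDiff_fderiv_apply hg v) a b
  rwa [fderiv_fderiv_apply hg] at this

lemma snd_symm (hg : ContDiff ℝ (⊤ : ℕ∞) g) (p v w : ℝ × ℝ) :
    fderiv ℝ (fderiv ℝ g) p v w = fderiv ℝ (fderiv ℝ g) p w v :=
  second_derivative_symmetric (fun y => ((hg.differentiable (by simp)) y).hasFDerivAt)
    (((hg.fderiv_right (m := (⊤ : ℕ∞)) (by simp)).differentiable (by simp) p).hasFDerivAt) v w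

end helpers

/-- for the cancellation/compensation field b_t, the diagonal partial
derivatives telescope (∂_1 b_1 = -m_1, ∂_D b_D = m_{D-1}, ∂_i b_i = m_{i-1} - m_i
in between), hence ∇·b_t = 0. -/
theorem cancellation_field_divergence_free (n : ℕ)
    (σ : ℝ → ℝ) (hσ : ContDiff ℝ (⊤ : ℕ∞) σ)
    (F f : ℝ → Fin (n + 2) → (Fin (n + 2) → ℝ) → ℝ)
    (hFsmooth : ∀ i, ContDiff ℝ (⊤ : ℕ∞) fun p : ℝ × (Fin (n + 2) → ℝ) => F p.1 i p.2)
    (hdep : ∀ (t : ℝ) (i : Fin (n + 2)) (x y : Fin (n + 2) → ℝ),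
      (∀ j ≤ i, x j = y j) → F t i x = F t i y)
    (hf : ∀ t i x, f t i x = pd i (F t i) x)
    (b : ℝ → (Fin (n + 2) → ℝ) → Fin (n + 2) → ℝ)
    (hblast : ∀ t x, b t x (Fin.last (n + 1))
      = σ (x (Fin.last (n + 1))) *
          deriv (fun τ =>
            ∏ j ∈ Finset.univ.filter (fun j => j < Fin.last (n + 1)), f τ j x) t)
    (hb0 : ∀ t x, b t x 0
      = -((∏ j ∈ Finset.univ.filter (fun j => 0 < j), deriv σ (x j)) *
          deriv (fun τ => F τ 0 x) t))
    (hbmid : ∀ (t : ℝ) (x : Fin (n + 2) → ℝ) (i : Fin (n + 2)),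
      0 < i → i < Fin.last (n + 1) →
      b t x i = (∏ j ∈ Finset.univ.filter (fun j => i < j), deriv σ (x j)) *
        ((σ (x i) - F t i x) *
            deriv (fun τ => ∏ j ∈ Finset.univ.filter (fun j => j < i), f τ j x) t
          - deriv (fun τ => F τ i x) t *
              ∏ j ∈ Finset.univ.filter (fun j => j < i), f t j x)) :
    ∀ (t : ℝ) (x : Fin (n + 2) → ℝ),
      pd 0 (fun y => b t y 0) x = -(M n σ f 0 t x)
      ∧ pd (Fin.last (n + 1)) (fun y => b t y (Fin.last (n + 1))) x
          = M n σ f (Fin.last (n + 1) - 1) t x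
      ∧ (∀ i : Fin (n + 2), 0 < i → i < Fin.last (n + 1) →
          pd i (fun y => b t y i) x = M n σ f (i - 1) t x - M n σ f i t x)
      ∧ ∑ i, pd i (fun y => b t y i) x = 0 := by
  intro t x
  classical
  -- smoothness of the two-variable slices
  have hGsm : ∀ j : Fin (n + 2),
      ContDiff ℝ (⊤ : ℕ∞) (fun p : ℝ × ℝ => F p.1 j (Function.update x j p.2)) := fun j =>
    (hFsmooth j).comp (contDiff_fst.prodMk ((contDiff_update ((⊤ : ℕ∞) : WithTop ℕ∞) x j).comp contDiff_snd))
  -- f at x via the slice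
  have hfx : ∀ (τ : ℝ) (j : Fin (n + 2)),
      f τ j x = fderiv ℝ (fun p : ℝ × ℝ => F p.1 j (Function.update x j p.2)) (τ, x j) (0, 1) := by
    intro τ j
    rw [hf]
    exact (hasDerivAt_snd' (hGsm j) τ (x j)).deriv
  -- f is unchanged by updating a later coordinate
  have hdepf : ∀ (τ : ℝ) (i j : Fin (n + 2)) (s : ℝ), j < i →
      f τ j (Function.update x i s) = f τ j x := by
    intro τ i j s hji
    rw [hf, hf]
    unfold pd
    rw [Function.update_of_ne (ne_of_lt hji)]
    congr 1
    funext u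
    apply hdep
    intro k hk
    rcases eq_or_ne k j with rfl | hkj
    · simp
    · rw [Function.update_of_ne hkj, Function.update_of_ne hkj,
        Function.update_of_ne (ne_of_lt ((lt_of_le_of_ne hk hkj).trans hji))]
  -- differentiability of t ↦ f t j x
  have hfdiff : ∀ (j : Fin (n + 2)) (τ : ℝ), HasDerivAt (fun τ' => f τ' j x)
      (fderiv ℝ (fderiv ℝ (fun p : ℝ × ℝ => F p.1 j (Function.update x j p.2)))
        (τ, x j) (1, 0) (0, 1)) τ := by
    intro j τ
    have h := hasDerivAt_fderiv_fst (hGsm j) (0, 1) τ (x j)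
    have he : (fun τ' => f τ' j x)
        = fun τ' => fderiv ℝ (fun p : ℝ × ℝ => F p.1 j (Function.update x j p.2)) (τ', x j) (0, 1) :=
      funext fun τ' => hfx τ' j
    rw [he]
    exact h
  have hPdiff : ∀ (S : Finset (Fin (n + 2))) (τ : ℝ),
      DifferentiableAt ℝ (fun τ' => ∏ j ∈ S, f τ' j x) τ :=
    fun S τ => DifferentiableAt.fun_finsetProd fun j _ => (hfdiff j τ).differentiableAt
  -- value of (last - 1)
  have hLne : (Fin.last (n + 1) : Fin (n + 2)) ≠ 0 := by simp [Fin.ext_iff]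
  have hLsub : ((Fin.last (n + 1) - 1 : Fin (n + 2))).val = n := by
    rw [Fin.coe_sub_one, if_neg hLne, Fin.val_last]
    omega
  ------------------------------------------------------------------
  -- Part 0
  ------------------------------------------------------------------
  have hle0 : Finset.univ.filter (fun j : Fin (n + 2) => j ≤ 0) = {0} := by
    ext j; simp [Fin.le_zero_iff]
  have h0 : pd 0 (fun y => b t y 0) x = -(M n σ f 0 t x) := by
    have hfun : (fun s => b t (Function.update x 0 s) 0) = fun s =>
        -((∏ j ∈ Finset.univ.filter (fun j : Fin (n + 2) => 0 < j), deriv σ (x j)) *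
          fderiv ℝ (fun p : ℝ × ℝ => F p.1 0 (Function.update x 0 p.2)) (t, s) (1, 0)) := by
      funext s
      rw [hb0]
      rw [show (∏ j ∈ Finset.univ.filter (fun j : Fin (n + 2) => 0 < j),
            deriv σ (Function.update x 0 s j))
          = ∏ j ∈ Finset.univ.filter (fun j : Fin (n + 2) => 0 < j), deriv σ (x j) from
        Finset.prod_congr rfl fun j hj => by
          rw [Function.update_of_ne (Finset.mem_filter.mp hj).2.ne']]
      rw [show deriv (fun τ => F τ 0 (Function.update x 0 s)) t
          = fderiv ℝ (fun p : ℝ × ℝ => F p.1 0 (Function.update x 0 p.2)) (t, s) (1, 0) from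
        (hasDerivAt_fst' (hGsm 0) t s).deriv]
    show deriv (fun s => b t (Function.update x 0 s) 0) (x 0) = _
    rw [hfun]
    have hD := ((hasDerivAt_fderiv_snd (hGsm 0) (1, 0) t (x 0)).const_mul
      (∏ j ∈ Finset.univ.filter (fun j : Fin (n + 2) => 0 < j), deriv σ (x j))).neg
    refine hD.deriv.trans ?_
    simp only [M]
    rw [hle0]
    simp only [Finset.prod_singleton]
    rw [(hfdiff 0 t).deriv, snd_symm (hGsm 0) (t, x 0) (0, 1) (1, 0)]
  ------------------------------------------------------------------
  -- Part last
  ------------------------------------------------------------------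
  have hgtL : Finset.univ.filter (fun j : Fin (n + 2) => Fin.last (n + 1) - 1 < j)
      = {Fin.last (n + 1)} := by
    ext j
    have hj := j.isLt
    simp only [Finset.mem_filter, Finset.mem_univ, true_and, Finset.mem_singleton,
      Fin.lt_def, hLsub, Fin.ext_iff, Fin.val_last]
    omega
  have hleL : Finset.univ.filter (fun j : Fin (n + 2) => j ≤ Fin.last (n + 1) - 1)
      = Finset.univ.filter (fun j => j < Fin.last (n + 1)) := by
    ext j
    have hj := j.isLt
    simp only [Finset.mem_filter, Finset.mem_univ, true_and, Fin.le_def, Fin.lt_def,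
      hLsub, Fin.val_last]
    omega
  have hlast : pd (Fin.last (n + 1)) (fun y => b t y (Fin.last (n + 1))) x
      = M n σ f (Fin.last (n + 1) - 1) t x := by
    have hfun : (fun s => b t (Function.update x (Fin.last (n + 1)) s) (Fin.last (n + 1)))
        = fun s => σ s *
            deriv (fun τ =>
              ∏ j ∈ Finset.univ.filter (fun j => j < Fin.last (n + 1)), f τ j x) t := by
      funext s
      rw [hblast, Function.update_self]
      rw [show (fun τ => ∏ j ∈ Finset.univ.filter (fun j => j < Fin.last (n + 1)),
            f τ j (Function.update x (Fin.last (n + 1)) s))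
          = fun τ => ∏ j ∈ Finset.univ.filter (fun j => j < Fin.last (n + 1)), f τ j x from
        funext fun τ => Finset.prod_congr rfl fun j hj =>
          hdepf τ (Fin.last (n + 1)) j s (Finset.mem_filter.mp hj).2]
    show deriv (fun s => b t (Function.update x (Fin.last (n + 1)) s) (Fin.last (n + 1)))
      (x (Fin.last (n + 1))) = _
    rw [hfun]
    have hσd : HasDerivAt σ (deriv σ (x (Fin.last (n + 1)))) (x (Fin.last (n + 1))) :=
      (hσ.differentiable (by simp) (x (Fin.last (n + 1)))).hasDerivAt
    refine (hσd.mul_const _).deriv.trans ?_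
    simp only [M]
    rw [hgtL, Finset.prod_singleton, hleL]
  ------------------------------------------------------------------
  -- Part mid
  ------------------------------------------------------------------
  have hmid : ∀ i : Fin (n + 2), 0 < i → i < Fin.last (n + 1) →
      pd i (fun y => b t y i) x = M n σ f (i - 1) t x - M n σ f i t x := by
    intro i h0i hiL
    have hi0 : i ≠ 0 := h0i.ne'
    have hival : 0 < i.val := by
      rw [Fin.lt_def, Fin.val_zero] at h0i; exact h0i
    have hisub : ((i - 1 : Fin (n + 2))).val = i.val - 1 := by
      rw [Fin.coe_sub_one, if_neg hi0]
    have hgt1 : Finset.univ.filter (fun j : Fin (n + 2) => i - 1 < j)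
        = insert i (Finset.univ.filter (fun j => i < j)) := by
      ext j
      have hj := j.isLt
      simp only [Finset.mem_filter, Finset.mem_univ, true_and, Finset.mem_insert,
        Fin.lt_def, hisub, Fin.ext_iff]
      omega
    have hle1 : Finset.univ.filter (fun j : Fin (n + 2) => j ≤ i - 1)
        = Finset.univ.filter (fun j => j < i) := by
      ext j
      simp only [Finset.mem_filter, Finset.mem_univ, true_and, Fin.le_def, Fin.lt_def, hisub]
      omega
    have hlei : Finset.univ.filter (fun j : Fin (n + 2) => j ≤ i)
        = insert i (Finset.univ.filter (fun j => j < i)) := by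
      ext j
      simp only [Finset.mem_filter, Finset.mem_univ, true_and, Finset.mem_insert,
        Fin.le_def, Fin.lt_def, Fin.ext_iff]
      omega
    have h2 := hasDerivAt_snd' (hGsm i) t (x i)
    have h3 := hasDerivAt_fderiv_snd (hGsm i) (1, 0) t (x i)
    have hσd : HasDerivAt σ (deriv σ (x i)) (x i) :=
      (hσ.differentiable (by simp) (x i)).hasDerivAt
    have hD := (((hσd.sub h2).mul_const
        (deriv (fun τ => ∏ j ∈ Finset.univ.filter (fun j => j < i), f τ j x) t)).sub
      (h3.mul_const (∏ j ∈ Finset.univ.filter (fun j => j < i), f t j x))).const_mul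
        (∏ j ∈ Finset.univ.filter (fun j => i < j), deriv σ (x j))
    have hfun : (fun s => b t (Function.update x i s) i) = fun s =>
        (∏ j ∈ Finset.univ.filter (fun j => i < j), deriv σ (x j)) *
          ((σ s - F t i (Function.update x i s)) *
              deriv (fun τ => ∏ j ∈ Finset.univ.filter (fun j => j < i), f τ j x) t
            - fderiv ℝ (fun p : ℝ × ℝ => F p.1 i (Function.update x i p.2)) (t, s) (1, 0) *
                ∏ j ∈ Finset.univ.filter (fun j => j < i), f t j x) := by
      funext s
      rw [hbmid t _ i h0i hiL, Function.update_self]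
      rw [show (∏ j ∈ Finset.univ.filter (fun j : Fin (n + 2) => i < j),
            deriv σ (Function.update x i s j))
          = ∏ j ∈ Finset.univ.filter (fun j => i < j), deriv σ (x j) from
        Finset.prod_congr rfl fun j hj => by
          rw [Function.update_of_ne (Finset.mem_filter.mp hj).2.ne']]
      rw [show (fun τ => ∏ j ∈ Finset.univ.filter (fun j => j < i),
            f τ j (Function.update x i s))
          = fun τ => ∏ j ∈ Finset.univ.filter (fun j => j < i), f τ j x from
        funext fun τ => Finset.prod_congr rfl fun j hj =>
          hdepf τ i j s (Finset.mem_filter.mp hj).2]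
      rw [show (∏ j ∈ Finset.univ.filter (fun j => j < i), f t j (Function.update x i s))
          = ∏ j ∈ Finset.univ.filter (fun j => j < i), f t j x from
        Finset.prod_congr rfl fun j hj => hdepf t i j s (Finset.mem_filter.mp hj).2]
      rw [show deriv (fun τ => F τ i (Function.update x i s)) t
          = fderiv ℝ (fun p : ℝ × ℝ => F p.1 i (Function.update x i p.2)) (t, s) (1, 0) from
        (hasDerivAt_fst' (hGsm i) t s).deriv]
    show deriv (fun s => b t (Function.update x i s) i) (x i) = _
    rw [hfun]
    refine hD.deriv.trans ?_
    simp only [M]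
    rw [hgt1, Finset.prod_insert (by simp), hle1, hlei]
    rw [show (fun τ => ∏ j ∈ insert i (Finset.univ.filter fun j => j < i), f τ j x)
        = fun τ => f τ i x * ∏ j ∈ Finset.univ.filter (fun j => j < i), f τ j x from
      funext fun τ => Finset.prod_insert (by simp)]
    rw [deriv_fun_mul (hfdiff i t).differentiableAt (hPdiff _ t), (hfdiff i t).deriv]
    rw [← hfx t i, snd_symm (hGsm i) (t, x i) (0, 1) (1, 0)]
    ring
  ------------------------------------------------------------------
  -- telescoping sum
  ------------------------------------------------------------------
  refine ⟨h0, hlast, hmid, ?_⟩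
  open Fin.NatCast in
  set W : ℕ → ℝ := fun k =>
    if 0 < k ∧ k < n + 2 then M n σ f ((k - 1 : ℕ) : Fin (n + 2)) t x else 0 with hWdef
  have key : ∀ i : Fin (n + 2), pd i (fun y => b t y i) x = W i.val - W (i.val + 1) := by
    intro i
    have hj := i.isLt
    by_cases h1 : i.val = 0
    · have hi : i = 0 := Fin.ext (by rw [Fin.val_zero, h1])
      rw [hi, h0, Fin.val_zero]
      simp only [hWdef]
      rw [if_neg (by omega), if_pos (by omega)]
      have e : ((1 - 1 : ℕ) : Fin (n + 2)) = 0 := by norm_num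
      rw [e]
      ring
    · by_cases h2 : i.val = n + 1
      · have hi : i = Fin.last (n + 1) := Fin.ext (by rw [Fin.val_last]; exact h2)
        rw [hi, hlast, Fin.val_last]
        simp only [hWdef]
        rw [if_pos (by omega), if_neg (by omega)]
        have e : ((n + 1 - 1 : ℕ) : Fin (n + 2)) = Fin.last (n + 1) - 1 := by
          rw [Fin.ext_iff, Fin.val_natCast, hLsub, Nat.mod_eq_of_lt (by omega)]
          omega
        rw [e]
        ring
      · have hi0 : 0 < i := by rw [Fin.lt_def, Fin.val_zero]; omega
        have hiL : i < Fin.last (n + 1) := by rw [Fin.lt_def, Fin.val_last]; omega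
        rw [hmid i hi0 hiL]
        simp only [hWdef]
        rw [if_pos (by omega), if_pos (by omega)]
        have e1 : ((i.val - 1 : ℕ) : Fin (n + 2)) = i - 1 := by
          rw [Fin.ext_iff, Fin.val_natCast, Fin.coe_sub_one, if_neg hi0.ne',
            Nat.mod_eq_of_lt (by omega)]
        have e2 : ((i.val + 1 - 1 : ℕ) : Fin (n + 2)) = i := by
          rw [Nat.add_sub_cancel]
          exact Fin.cast_val_eq_self i
        rw [e1, e2]
  calc ∑ i, pd i (fun y => b t y i) x
      = ∑ i : Fin (n + 2), (W i.val - W (i.val + 1)) :=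
        Finset.sum_congr rfl fun i _ => key i
    _ = ∑ k ∈ Finset.range (n + 2), (W k - W (k + 1)) :=
        Fin.sum_univ_eq_sum_range (fun k => W k - W (k + 1)) (n + 2)
    _ = W 0 - W (n + 2) := Finset.sum_range_sub' _ _
    _ = 0 := by
        simp only [hWdef]
        rw [if_neg (by omega), if_neg (by omega)]
        ring
end

section
/- With a_t and b_t given by the autoregressive constructions (eq. for a_t: [a_t]_i = 0 for i < D, [a_t]_D = F_t(x_D|x_{1:D-1})∏_{j<D} f_t(x_j|x_{1:j-1}); b_t as the cancellation/compensation field), the D-th flux coordinate [j_t]_D = -∂_t[a_t]_D + [b_t]_D satisfies lim_{x_D → +∞} [j_t]_D(x) = (σ(+∞) - 1)·∂_t(∏_{j<D} f_t(x_j|x_{1:j-1})) = 0, i.e. the cancellation term exactly removes the spurious flux in the last coordinate. -/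
open Filter Topology

/-- The sigmoid function σ(z) = 1/(1+e^{-z}). -/
noncomputable def sigmoid (z : ℝ) : ℝ := (1 + Real.exp (-z))⁻¹

/-- with the autoregressive a_t and the cancellation term
[b_t]_D = σ(x_D)·∂_t(∏_{j<D} f_t(x_j|x_{1:j-1})), the D-th flux coordinate
[j_t]_D = -∂_t[a_t]_D + [b_t]_D tends to 0 as x_D → +∞: the cancellation term
exactly removes the spurious flux in the last coordinate. -/
theorem cancellation_removes_spurious_flux (D : ℕ)
    (F f : ℝ → Fin (D + 1) → (Fin (D + 1) → ℝ) → ℝ)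
    (hFsmooth : ∀ i, ContDiff ℝ (⊤ : ℕ∞) fun p : ℝ × (Fin (D + 1) → ℝ) => F p.1 i p.2)
    (hdep : ∀ (t : ℝ) (i : Fin (D + 1)) (x y : Fin (D + 1) → ℝ),
      (∀ j ≤ i, x j = y j) → F t i x = F t i y)
    (hf : ∀ t i x, f t i x = pd i (F t i) x)
    (hF1 : ∀ (t : ℝ) (x : Fin (D + 1) → ℝ),
      Tendsto (fun s => F t (Fin.last D) (Function.update x (Fin.last D) s)) atTop (nhds 1))
    (hFt : ∀ (t : ℝ) (x : Fin (D + 1) → ℝ),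
      Tendsto (fun s => deriv (fun τ => F τ (Fin.last D) (Function.update x (Fin.last D) s)) t)
        atTop (nhds 0))
    (a b : ℝ → (Fin (D + 1) → ℝ) → Fin (D + 1) → ℝ)
    (ha0 : ∀ t x i, i ≠ Fin.last D → a t x i = 0)
    (haD : ∀ t x, a t x (Fin.last D)
      = F t (Fin.last D) x * ∏ k : Fin D, f t k.castSucc x)
    (hbD : ∀ t x, b t x (Fin.last D)
      = sigmoid (x (Fin.last D)) * deriv (fun τ => ∏ k : Fin D, f τ k.castSucc x) t) :
    ∀ (t : ℝ) (x : Fin (D + 1) → ℝ),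
      Tendsto (fun s =>
          -deriv (fun τ => a τ (Function.update x (Fin.last D) s) (Fin.last D)) t
            + b t (Function.update x (Fin.last D) s) (Fin.last D))
        atTop (nhds 0) := by
  intro t x
  -- f does not depend on the last coordinate
  have hfind : ∀ (τ s : ℝ) (k : Fin D),
      f τ k.castSucc (Function.update x (Fin.last D) s) = f τ k.castSucc x := by
    intro τ s k
    have hne : k.castSucc ≠ Fin.last D := (Fin.castSucc_lt_last k).ne
    rw [hf, hf]
    unfold pd
    rw [Function.update_of_ne hne]
    congr 1
    funext s'
    apply hdep
    intro j hj
    have hjne : j ≠ Fin.last D := by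
      intro h; subst h
      exact absurd hj (not_le.mpr (Fin.castSucc_lt_last k))
    by_cases hjk : j = k.castSucc
    · subst hjk; simp
    · rw [Function.update_of_ne hjk, Function.update_of_ne hjk,
        Function.update_of_ne hjne]
  -- smoothness of τ ↦ F τ i y
  have hFdiff : ∀ (i : Fin (D + 1)) (y : Fin (D + 1) → ℝ),
      Differentiable ℝ (fun τ => F τ i y) :=
    fun i y => (((hFsmooth i).comp (contDiff_id.prodMk contDiff_const)).differentiable
      (by simp))
  -- differentiability of τ ↦ f τ i y
  have hfdiff : ∀ (i : Fin (D + 1)) (y : Fin (D + 1) → ℝ),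
      Differentiable ℝ (fun τ => f τ i y) := by
    intro i y
    have hup : ContDiff ℝ (⊤ : ℕ∞) fun p : ℝ × ℝ => (p.1, Function.update y i p.2) :=
      contDiff_fst.prodMk ((contDiff_update (⊤ : ℕ∞) y i).comp contDiff_snd)
    have hcomp : ContDiff ℝ (⊤ : ℕ∞) fun p : ℝ × ℝ => F p.1 i (Function.update y i p.2) :=
      (hFsmooth i).comp hup
    have hfd : ContDiff ℝ (⊤ : ℕ∞) fun τ : ℝ =>
        fderiv ℝ (fun s => F τ i (Function.update y i s)) (y i) (1 : ℝ) :=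
      ContDiff.fderiv_apply (f := fun τ s => F τ i (Function.update y i s))
        (g := fun _ => y i) (k := fun _ => (1 : ℝ)) hcomp contDiff_const contDiff_const
        (by simp)
    have heq : (fun τ => f τ i y)
        = fun τ => fderiv ℝ (fun s => F τ i (Function.update y i s)) (y i) (1 : ℝ) := by
      funext τ
      rw [hf]
      unfold pd
      rw [fderiv_apply_one_eq_deriv]
    rw [heq]
    exact hfd.differentiable (by simp)
  set P : ℝ → ℝ := fun τ => ∏ k : Fin D, f τ k.castSucc x with hP
  have hPdiff : Differentiable ℝ P := by
    apply Differentiable.fun_finsetProd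
    intro k _
    exact hfdiff k.castSucc x
  set c : ℝ := deriv P t with hc
  -- rewrite the function whose limit we take
  have hkey : ∀ s : ℝ,
      -deriv (fun τ => a τ (Function.update x (Fin.last D) s) (Fin.last D)) t
        + b t (Function.update x (Fin.last D) s) (Fin.last D)
      = -(deriv (fun τ => F τ (Fin.last D) (Function.update x (Fin.last D) s)) t * P t
          + F t (Fin.last D) (Function.update x (Fin.last D) s) * c)
        + sigmoid s * c := by
    intro s
    have ha' : (fun τ => a τ (Function.update x (Fin.last D) s) (Fin.last D))
        = fun τ => F τ (Fin.last D) (Function.update x (Fin.last D) s) * P τ := by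
      funext τ
      rw [haD]
      congr 1
      exact Finset.prod_congr rfl fun k _ => hfind τ s k
    have hb' : b t (Function.update x (Fin.last D) s) (Fin.last D) = sigmoid s * c := by
      rw [hbD]
      have : (fun τ => ∏ k : Fin D, f τ k.castSucc (Function.update x (Fin.last D) s)) = P := by
        funext τ
        exact Finset.prod_congr rfl fun k _ => hfind τ s k
      rw [this, Function.update_self]
    rw [ha', hb']
    rw [deriv_fun_mul (hFdiff (Fin.last D) _ t) (hPdiff t)]
  simp only [hkey]
  -- limits
  have hsig : Tendsto sigmoid atTop (nhds 1) := by
    have h1 : Tendsto (fun s : ℝ => 1 + Real.exp (-s)) atTop (nhds (1 + 0)) :=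
      tendsto_const_nhds.add Real.tendsto_exp_neg_atTop_nhds_zero
    have := h1.inv₀ (by norm_num)
    show Tendsto (fun s : ℝ => (1 + Real.exp (-s))⁻¹) atTop (nhds 1)
    simpa [sigmoid] using this
  have hlim : Tendsto (fun s =>
      -(deriv (fun τ => F τ (Fin.last D) (Function.update x (Fin.last D) s)) t * P t
          + F t (Fin.last D) (Function.update x (Fin.last D) s) * c)
        + sigmoid s * c) atTop (nhds (-(0 * P t + 1 * c) + 1 * c)) :=
    (((hFt t x).mul_const (P t)).add ((hF1 t x).mul_const c)).neg.add (hsig.mul_const c)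
  have : -(0 * P t + 1 * c) + 1 * c = 0 := by ring
  rwa [this] at hlim
end

section
/- Let f : ℝ × ℝ → ℝ be smooth with f_t(x) > 0 being a probability density in x for each t, with CDF F_t. For D-dimensional factorized density ρ_t(x) = ∏_{i=1}^D f_t(x_i) and velocity [u_t]_i(x) = -∂_t F_t(x_i)/f_t(x_i), the pair (ρ_t, u_t) satisfies the continuity equation ∂_t ρ_t + ∇·(ρ_t u_t) = 0. -/
open Filter Topology MeasureTheory

/-- the factorized density ρ_t(x) = ∏_i f_t(x_i) together with the
velocity [u_t]_i = -∂_t F_t(x_i)/f_t(x_i) satisfies the continuity equation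
∂_t ρ_t + ∇·(ρ_t u_t) = 0. -/
theorem factorized_model_continuity (D : ℕ)
    (F f : ℝ → ℝ → ℝ)
    (hF : ContDiff ℝ (⊤ : ℕ∞) fun p : ℝ × ℝ => F p.1 p.2)
    (hf : ∀ t y, f t y = deriv (F t) y)
    (hfpos : ∀ t y, 0 < f t y)
    (hdens : ∀ t, ∫ y : ℝ, f t y = 1) :
    ∀ (t : ℝ) (x : Fin D → ℝ),
      deriv (fun τ => ∏ i, f τ (x i)) t
        + ∑ i, pd i
            (fun y => (∏ k, f t (y k)) * (-deriv (fun τ => F τ (y i)) t / f t (y i))) x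
        = 0 := by
  intro t x
  set G : ℝ × ℝ → ℝ := fun p : ℝ × ℝ => F p.1 p.2 with hGdef
  set DG : ℝ × ℝ → (ℝ × ℝ →L[ℝ] ℝ) := fderiv ℝ G with hDGdef
  set G2 : ℝ × ℝ → (ℝ × ℝ →L[ℝ] (ℝ × ℝ →L[ℝ] ℝ)) := fderiv ℝ DG with hG2def
  have hDG : ∀ p : ℝ × ℝ, HasFDerivAt G (DG p) p := fun p =>
    ((hF.differentiable (by simp)) p).hasFDerivAt
  have hDGsmooth : ContDiff ℝ (⊤ : ℕ∞) DG := hF.fderiv_right (by simp)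
  have hG2 : ∀ p : ℝ × ℝ, HasFDerivAt DG (G2 p) p := fun p =>
    ((hDGsmooth.differentiable (by simp)) p).hasFDerivAt
  -- partial derivative in the second variable equals f
  have hcurve2 : ∀ (t0 y0 : ℝ), HasDerivAt (fun s : ℝ => ((t0, s) : ℝ × ℝ)) (0, 1) y0 :=
    fun t0 y0 => (hasDerivAt_const y0 t0).prodMk (hasDerivAt_id y0)
  have hcurve1 : ∀ (t0 y0 : ℝ), HasDerivAt (fun s : ℝ => ((s, y0) : ℝ × ℝ)) (1, 0) t0 :=
    fun t0 y0 => (hasDerivAt_id t0).prodMk (hasDerivAt_const t0 y0)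
  have hfd : ∀ t0 y0, f t0 y0 = DG (t0, y0) (0, 1) := by
    intro t0 y0
    have h1 : HasDerivAt (F t0) (DG (t0, y0) (0, 1)) y0 :=
      (hDG (t0, y0)).comp_hasDerivAt y0 (hcurve2 t0 y0)
    rw [hf t0 y0, h1.deriv]
  have hpartial1 : ∀ t0 y0, HasDerivAt (fun τ => F τ y0) (DG (t0, y0) (1, 0)) t0 :=
    fun t0 y0 => ((hDG (t0, y0)).comp_hasDerivAt t0 (hcurve1 t0 y0) :)
  -- mixed partial derivatives
  have hmix1 : ∀ t0 y0, HasDerivAt (fun τ => DG (τ, y0) (0, 1)) (G2 (t0, y0) (1, 0) (0, 1)) t0 := by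
    intro t0 y0
    have h1 : HasDerivAt (fun τ => DG (τ, y0)) (G2 (t0, y0) (1, 0)) t0 :=
      (hG2 (t0, y0)).comp_hasDerivAt t0 (hcurve1 t0 y0)
    exact ((ContinuousLinearMap.apply ℝ ℝ ((0 : ℝ), (1 : ℝ))).hasFDerivAt.comp_hasDerivAt t0 h1)
  have hmix2 : ∀ t0 y0, HasDerivAt (fun s => DG (t0, s) (1, 0)) (G2 (t0, y0) (0, 1) (1, 0)) y0 := by
    intro t0 y0
    have h1 : HasDerivAt (fun s => DG (t0, s)) (G2 (t0, y0) (0, 1)) y0 :=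
      (hG2 (t0, y0)).comp_hasDerivAt y0 (hcurve2 t0 y0)
    exact ((ContinuousLinearMap.apply ℝ ℝ ((1 : ℝ), (0 : ℝ))).hasFDerivAt.comp_hasDerivAt y0 h1)
  have hsymm : ∀ t0 y0, G2 (t0, y0) (0, 1) (1, 0) = G2 (t0, y0) (1, 0) (0, 1) :=
    fun t0 y0 => second_derivative_symmetric hDG (hG2 (t0, y0)) _ _
  -- time derivative of the product
  have hA : HasDerivAt (fun τ => ∏ i, f τ (x i))
      (∑ i, (∏ j ∈ Finset.univ.erase i, f t (x j)) * G2 (t, x i) (1, 0) (0, 1)) t := by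
    have h1 : HasDerivAt (fun τ => ∏ i, DG (τ, x i) (0, 1))
        (∑ i, (∏ j ∈ Finset.univ.erase i, DG (t, x j) (0, 1)) • G2 (t, x i) (1, 0) (0, 1)) t :=
      HasDerivAt.fun_finsetProd (fun i _ => hmix1 t (x i))
    have heq : (fun τ => ∏ i, f τ (x i)) = fun τ => ∏ i, DG (τ, x i) (0, 1) := by
      funext τ; exact Finset.prod_congr rfl fun i _ => hfd τ (x i)
    rw [heq]
    convert h1 using 2 with i
    rw [smul_eq_mul]
    congr 1
    exact Finset.prod_congr rfl fun j _ => hfd t (x j)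
  -- the divergence terms
  have hB : ∀ i : Fin D,
      pd i (fun y => (∏ k, f t (y k)) * (-deriv (fun τ => F τ (y i)) t / f t (y i))) x
        = -((∏ j ∈ Finset.univ.erase i, f t (x j)) * G2 (t, x i) (1, 0) (0, 1)) := by
    intro i
    have hfun : ∀ s : ℝ,
        (fun y => (∏ k, f t (y k)) * (-deriv (fun τ => F τ (y i)) t / f t (y i)))
          (Function.update x i s)
        = -((∏ j ∈ Finset.univ.erase i, f t (x j)) * DG (t, s) (1, 0)) := by
      intro s
      have hupdi : Function.update x i s i = s := Function.update_self i s x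
      have hprod : (∏ k, f t (Function.update x i s k))
          = f t s * ∏ j ∈ Finset.univ.erase i, f t (x j) := by
        rw [← Finset.prod_erase_mul Finset.univ _ (Finset.mem_univ i), hupdi, mul_comm]
        congr 1
        exact Finset.prod_congr rfl fun j hj =>
          congrArg (f t) (Function.update_of_ne (Finset.ne_of_mem_erase hj) s x)
      have hderiv : deriv (fun τ => F τ (Function.update x i s i)) t = DG (t, s) (1, 0) := by
        rw [hupdi]; exact (hpartial1 t s).deriv
      simp only [hprod, hupdi]
      rw [(hpartial1 t s).deriv]
      field_simp [(hfpos t s).ne']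
    have : pd i (fun y => (∏ k, f t (y k)) * (-deriv (fun τ => F τ (y i)) t / f t (y i))) x
        = deriv (fun s => -((∏ j ∈ Finset.univ.erase i, f t (x j)) * DG (t, s) (1, 0))) (x i) := by
      unfold pd; congr 1; funext s; exact hfun s
    rw [this]
    have hd : HasDerivAt (fun s => -((∏ j ∈ Finset.univ.erase i, f t (x j)) * DG (t, s) (1, 0)))
        (-((∏ j ∈ Finset.univ.erase i, f t (x j)) * G2 (t, x i) (0, 1) (1, 0))) (x i) :=
      (((hmix2 t (x i)).const_mul (∏ j ∈ Finset.univ.erase i, f t (x j))).neg)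
    rw [hd.deriv, hsymm t (x i)]
  rw [hA.deriv]
  simp only [hB]
  rw [← Finset.sum_add_distrib]
  simp
end
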